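/- arXiv:1608.06169 — 5 statements merged into one kernel-verified Lean document; each statement's English description precedes it below -/
import Mathlib

section
/- Let C ∈ X and suppose the OD X \ {C}: [] ↦ C holds in r. Then for any attributes A, B, if X: A ~ B holds in r, so does X \ {C}: A ~ B. -/
/-- Tuples `s`, `t` agree on all attributes of `X`. -/
def equivOn {α V : Type*} (X : Set α) (s t : α → V) : Prop :=
  ∀ B ∈ X, s B = t B

/-- The set-based constancy OD `X : [] ↦ A` holds in `r`. -/
def constOD {α V : Type*} (r : Set (α → V)) (X : Set α) (A : α) : Prop :=
  ∀ s ∈ r, ∀ t ∈ r, equivOn X s t → s A = t A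

/-- The set-based order compatibility OD `X : A ~ B` holds in `r` (no swap). -/
def ocOD {α V : Type*} [LinearOrder V] (r : Set (α → V)) (X : Set α) (A B : α) : Prop :=
  ¬ ∃ s ∈ r, ∃ t ∈ r, equivOn X s t ∧ s A < t A ∧ t B < s B

theorem stmt7 {α V : Type*} [LinearOrder V] (r : Set (α → V)) (hfin : r.Finite)
    (X : Set α) (A B C : α) (hC : C ∈ X) (hXC : constOD r (X \ {C}) C)
    (h : ocOD r X A B) : ocOD r (X \ {C}) A B := by
  rintro ⟨s, hs, t, ht, heq, hlt⟩
  exact h ⟨s, hs, t, ht, fun D hD => by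
    by_cases hDC : D = C
    · subst hDC; exact hXC s hs t ht heq
    · exact heq D ⟨hD, hDC⟩, hlt⟩
end

section
/- A list-based order dependency X ↦ Y holds in r if and only if both X ↦ XY and X ~ Y hold in r, where XY denotes list concatenation and X ~ Y means XY ↦ YX. -/
/-! Everything follows from two facts about the lexicographic preorder: `s ≤_{XY} t` implies
`s ≤_X t`, and `s ≤_X t` together with `s ≤_Y t` implies `s ≤_{XY} t`. Hence list-based ODs are
reflexive and transitive, `XY ↦ X` always holds, and `X ↦ Y`, `X ↦ Z` give `X ↦ YZ`. -/

/-- Lexicographic preorder on tuples induced by a list of attributes. -/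
def lexLE {α V : Type*} [LinearOrder V] : List α → (α → V) → (α → V) → Prop
  | [], _, _ => True
  | A :: X, s, t => s A < t A ∨ (s A = t A ∧ lexLE X s t)

/-- The list-based OD `X ↦ Y` holds in `r`. -/
def listOD {α V : Type*} [LinearOrder V] (r : Set (α → V)) (X Y : List α) : Prop :=
  ∀ s ∈ r, ∀ t ∈ r, lexLE X s t → lexLE Y s t

section Lex

variable {α V : Type*} [LinearOrder V]

lemma lexLE_of_append {X Y : List α} {s t : α → V} (h : lexLE (X ++ Y) s t) :
    lexLE X s t := by
  induction X with
  | nil => trivial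
  | cons A X ih => exact h.imp_right (And.imp_right ih)

lemma lexLE_append {X Y : List α} {s t : α → V} (hX : lexLE X s t) (hY : lexLE Y s t) :
    lexLE (X ++ Y) s t := by
  induction X with
  | nil => exact hY
  | cons A X ih => exact hX.imp_right (And.imp_right ih)

end Lex

section ListOD

variable {α V : Type*} [LinearOrder V] {r : Set (α → V)} {X Y Z : List α}

lemma listOD_refl (r : Set (α → V)) (X : List α) : listOD r X X :=
  fun _ _ _ _ h => h

lemma listOD.trans (hXY : listOD r X Y) (hYZ : listOD r Y Z) : listOD r X Z :=
  fun s hs t ht h => hYZ s hs t ht (hXY s hs t ht h)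

lemma listOD_append_left (r : Set (α → V)) (X Y : List α) : listOD r (X ++ Y) X :=
  fun _ _ _ _ => lexLE_of_append

lemma listOD.append (hY : listOD r X Y) (hZ : listOD r X Z) : listOD r X (Y ++ Z) :=
  fun s hs t ht h => lexLE_append (hY s hs t ht h) (hZ s hs t ht h)

end ListOD

theorem stmt12_general {α V : Type*} [LinearOrder V] (r : Set (α → V))
    (X Y : List α) :
    listOD r X Y ↔ listOD r X (X ++ Y) ∧ listOD r (X ++ Y) (Y ++ X) := by
  constructor
  · intro h
    exact ⟨(listOD_refl r X).append h,
      ((listOD_append_left r X Y).trans h).append (listOD_append_left r X Y)⟩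
  · rintro ⟨hXY, hcompat⟩
    exact (hXY.trans hcompat).trans (listOD_append_left r Y X)

theorem stmt12 {α V : Type*} [LinearOrder V] (r : Set (α → V)) (hfin : r.Finite)
    (X Y : List α) :
    listOD r X Y ↔ listOD r X (X ++ Y) ∧ listOD r (X ++ Y) (Y ++ X) :=
  stmt12_general r X Y
end

section
/- For a set of attributes X and attribute A, the set-based OD X: [] ↦ A holds in r if and only if the functional dependency X → A holds in r, i.e., any two tuples agreeing on all attributes of X also agree on A. Moreover, this is equivalent to the list-based OD X' ↦ X'A holding for any (equivalently every) list X' enumerating X. -/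
lemma lexLE_append_or {α V : Type*} [LinearOrder V] (X Y : List α) (s t : α → V)
    (h : lexLE X s t) : (∀ a ∈ X, s a = t a) ∨ lexLE (X ++ Y) s t := by
  induction X with
  | nil => exact Or.inl (by simp)
  | cons A X ih =>
    rcases h with h | ⟨he, h⟩
    · exact Or.inr (Or.inl h)
    · rcases ih h with h' | h'
      · exact Or.inl (by simpa [he] using h')
      · exact Or.inr (Or.inr ⟨he, h'⟩)

lemma lexLE_append_of_agree {α V : Type*} [LinearOrder V] (X Y : List α) (s t : α → V)
    (ha : ∀ a ∈ X, s a = t a) (h : lexLE Y s t) : lexLE (X ++ Y) s t := by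
  induction X with
  | nil => simpa
  | cons A X ih =>
    exact Or.inr ⟨ha A (by simp), ih fun a haX => ha a (by simp [haX])⟩

lemma lexLE_of_append_agree {α V : Type*} [LinearOrder V] (X Y : List α) (s t : α → V)
    (ha : ∀ a ∈ X, s a = t a) (h : lexLE (X ++ Y) s t) : lexLE Y s t := by
  induction X with
  | nil => simpa using h
  | cons A X ih =>
    rcases h with h | ⟨_, h⟩
    · exact absurd (ha A (by simp)) (ne_of_lt h)
    · exact ih (fun a haX => ha a (by simp [haX])) h

theorem stmt13 {α V : Type*} [LinearOrder V] (r : Set (α → V)) (hfin : r.Finite)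
    (X : Set α) (A : α) :
    (constOD r X A ↔
      ∀ s ∈ r, ∀ t ∈ r, (∀ B ∈ X, s B = t B) → s A = t A) ∧
    (∀ X' : List α, X'.Nodup → (∀ a, a ∈ X' ↔ a ∈ X) →
      (constOD r X A ↔ listOD r X' (X' ++ [A]))) := by
  refine ⟨Iff.rfl, fun X' _ hmem => ?_⟩
  constructor
  · intro hc s hs t ht hlex
    rcases lexLE_append_or X' [A] s t hlex with ha | h
    · refine lexLE_append_of_agree X' [A] s t ha ?_
      exact Or.inr ⟨hc s hs t ht fun B hB => ha B ((hmem B).2 hB), trivial⟩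
    · exact h
  · intro hl s hs t ht heq
    have heq' : ∀ a ∈ X', s a = t a := fun a ha => heq a ((hmem a).1 ha)
    have h1 : lexLE X' s t := by
      have := lexLE_append_of_agree X' [] s t heq' (by trivial)
      simpa using this
    have h2 : lexLE X' t s := by
      have := lexLE_append_of_agree X' [] t s (fun a ha => (heq' a ha).symm) (by trivial)
      simpa using this
    have e1 := lexLE_of_append_agree X' [A] s t heq' (hl s hs t ht h1)
    have e2 := lexLE_of_append_agree X' [A] t s (fun a ha => (heq' a ha).symm) (hl t ht s hs h2)
    have l1 : s A ≤ t A := by rcases e1 with h | ⟨h, _⟩ <;> [exact le_of_lt h; exact le_of_eq h]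
    have l2 : t A ≤ s A := by rcases e2 with h | ⟨h, _⟩ <;> [exact le_of_lt h; exact le_of_eq h]
    exact le_antisymm l1 l2
end

section
/- (Chain-style derivation used in Lemma on context minimization) Suppose C ∈ X, and in r the ODs X \ {C}: A ~ C, X \ {C}: B ~ C, and X: A ~ B all hold. Then X \ {C}: A ~ B holds in r, provided X \ {C}: [] ↦ C also holds. -/
theorem stmt16 {α V : Type*} [LinearOrder V] (r : Set (α → V)) (hfin : r.Finite)
    (X : Set α) (A B C : α) (hC : C ∈ X)
    (hAC : ocOD r (X \ {C}) A C) (hBC : ocOD r (X \ {C}) B C)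
    (hAB : ocOD r X A B) (hconst : constOD r (X \ {C}) C) :
    ocOD r (X \ {C}) A B := by
  rintro ⟨s, hs, t, ht, heq, hA, hB⟩
  apply hAB
  refine ⟨s, hs, t, ht, ?_, hA, hB⟩
  intro D hD
  by_cases hDC : D = C
  · subst hDC; exact hconst s hs t ht heq
  · exact heq D ⟨hD, hDC⟩
end

section
/- If the constancy OD X \ {A}: [] ↦ A holds in r and the constancy OD X \ {B}: [] ↦ B holds in r for distinct attributes A, B ∈ X, then for every attribute D ∉ X the OD X: [] ↦ D is not minimal whenever it holds: specifically, if X: [] ↦ D holds then X \ {A}: [] ↦ D holds. -/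
theorem stmt17 {α V : Type*} [LinearOrder V] (r : Set (α → V)) (hfin : r.Finite)
    (X : Set α) (A B D : α) (hA : A ∈ X) (hB : B ∈ X) (hAB : A ≠ B) (hD : D ∉ X)
    (hXA : constOD r (X \ {A}) A) (hXB : constOD r (X \ {B}) B)
    (h : constOD r X D) : constOD r (X \ {A}) D := by
  intro s hs t ht heq
  have hsA : s A = t A := hXA s hs t ht heq
  apply h s hs t ht
  intro C hC
  by_cases hCA : C = A
  · subst hCA; exact hsA
  · exact heq C ⟨hC, hCA⟩
end
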